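/- Let Q be the quadratic form x ↦ −x² on ℝ (viewed as a module over itself). The submonoid of CliffordAlgebra Q generated by the set {ι(v) : v ∈ ℝ, v² = 1} (that is, generated by ι(1) and ι(−1)) is isomorphic, as a monoid, to the cyclic group Multiplicative (ZMod 4). (This is the paper's claim that the negative Pin group in dimension one satisfies Pin⁻₁ ≅ ℤ/4.) -/

import Mathlib

open CliffordAlgebra

/-- The quadratic form `x ↦ -x²` on `ℝ`. -/
noncomputable def negSqForm : QuadraticForm ℝ ℝ := -QuadraticMap.sq

/-!
`ι 1` squares to `Q 1 = -1`, so `ι (-1) = -ι 1 = (ι 1)³` and the generators span the powers of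
`ι 1`. Under the identification of the Clifford algebra with `ℂ`, `ι 1` is `i`, of order `4`.
-/

namespace Submonoid

variable {M : Type*} [Monoid M]

theorem closure_pair_eq_powers {x y : M} (hy : y ∈ powers x) : closure {x, y} = powers x := by
  refine le_antisymm (closure_le.2 ?_) (powers_le.2 (subset_closure (Set.mem_insert x {y})))
  exact Set.insert_subset (mem_powers x) (Set.singleton_subset_iff.2 hy)

variable {x : M} {n : ℕ} [NeZero n]

def zmodPowersHom (hx : orderOf x = n) : Multiplicative (ZMod n) →* powers x where
  toFun k := ⟨x ^ k.toAdd.val, k.toAdd.val, rfl⟩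
  map_one' := by ext; simp
  map_mul' a b := by
    ext
    simp only [toAdd_mul, ZMod.val_add, ← hx, pow_mod_orderOf, pow_add, coe_mul]

theorem zmodPowersHom_bijective (hx : orderOf x = n) : Function.Bijective (zmodPowersHom hx) := by
  constructor
  · intro a b hab
    have hlt (k : Multiplicative (ZMod n)) : k.toAdd.val < orderOf x := by
      rw [hx]; exact ZMod.val_lt _
    exact Multiplicative.toAdd.injective <| ZMod.val_injective n <|
      pow_injOn_Iio_orderOf (hlt a) (hlt b) (congrArg Subtype.val hab)
  · rintro ⟨_, k, rfl⟩
    refine ⟨Multiplicative.ofAdd (k : ZMod n), Subtype.ext ?_⟩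
    simp [zmodPowersHom, ZMod.val_natCast, ← hx, pow_mod_orderOf]

noncomputable def zmodMulEquivPowers (hx : orderOf x = n) : Multiplicative (ZMod n) ≃* powers x :=
  MulEquiv.ofBijective _ (zmodPowersHom_bijective hx)

end Submonoid

theorem CliffordAlgebra.ι_pow_three_of_eq_neg_one {R M : Type*} [CommRing R] [AddCommGroup M]
    [Module R M] {Q : QuadraticForm R M} {v : M} (hv : Q v = -1) : ι Q v ^ 3 = -ι Q v := by
  rw [pow_succ', pow_two, ι_sq_scalar, hv, map_neg, map_one, mul_neg_one]

theorem CliffordAlgebra.setOf_ι_sq_eq_one (Q : QuadraticForm ℝ ℝ) :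
    {x : CliffordAlgebra Q | ∃ v : ℝ, v ^ 2 = 1 ∧ ι Q v = x} = {ι Q 1, -ι Q 1} := by
  ext x
  simp only [Set.mem_ofPred_eq, Set.mem_insert_iff, Set.mem_singleton_iff, sq_eq_one_iff]
  constructor
  · rintro ⟨v, rfl | rfl, rfl⟩
    exacts [Or.inl rfl, Or.inr (map_neg _ _)]
  · rintro (rfl | rfl)
    exacts [⟨1, Or.inl rfl, rfl⟩, ⟨-1, Or.inr rfl, map_neg _ _⟩]

theorem orderOf_ι_negSqForm_one : orderOf (ι negSqForm 1) = 4 := by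
  refine (MulEquiv.orderOf_eq CliffordAlgebraComplex.equiv.toMulEquiv _).symm.trans ?_
  change orderOf (CliffordAlgebraComplex.toComplex (ι _ 1)) = 4
  rw [CliffordAlgebraComplex.toComplex_ι, one_smul]
  exact Complex.isPrimitiveRoot_I.eq_orderOf.symm

/-- For the quadratic form `Q(x) = -x²` on `ℝ`, the submonoid of the Clifford
algebra of `Q` generated by `{ι v : v² = 1}` (i.e. by `ι 1` and `ι (-1)`) is isomorphic, as a
monoid, to the cyclic group `ℤ/4`; this is the claim `Pin⁻₁ ≅ ℤ/4`. -/
theorem pinMinus_one_iso_zmodFour :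
    Nonempty
      ((Submonoid.closure
          {x : CliffordAlgebra negSqForm | ∃ v : ℝ, v ^ 2 = 1 ∧ ι negSqForm v = x}) ≃*
        Multiplicative (ZMod 4)) := by
  have hgen : Submonoid.closure
      {x : CliffordAlgebra negSqForm | ∃ v : ℝ, v ^ 2 = 1 ∧ ι negSqForm v = x} =
        Submonoid.powers (ι negSqForm 1) := by
    rw [setOf_ι_sq_eq_one, ← ι_pow_three_of_eq_neg_one (by simp [negSqForm])]
    exact Submonoid.closure_pair_eq_powers ⟨3, rfl⟩
  exact ⟨(MulEquiv.submonoidCongr hgen).trans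
    (Submonoid.zmodMulEquivPowers orderOf_ι_negSqForm_one).symm⟩
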